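/- Let f : R → S be a ring homomorphism of commutative rings such that S is integral over the image f(R), and suppose S has exactly one minimal prime ideal q. Then p := f^{-1}(q) is a prime ideal of R containing ker f, and p is the unique prime of R that is minimal among primes containing ker f; equivalently, every prime ideal of R containing ker f contains f^{-1}(q). -/
import Mathlib

/-- Let `f : R → S` be a homomorphism of commutative rings such that `S`
is integral over the image of `f`, and suppose `S` has exactly one minimal prime `q`.
Then `p := f⁻¹(q)` is a prime ideal of `R` containing `ker f`, `p` is the unique prime of
`R` minimal among primes containing `ker f`, and every prime ideal of `R` containing
`ker f` contains `p`. -/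
theorem stmt7 {R S : Type*} [CommRing R] [CommRing S] (f : R →+* S)
    (hf : f.IsIntegral) (q : Ideal S) (hq : minimalPrimes S = {q}) :
    (Ideal.comap f q).IsPrime ∧
    RingHom.ker f ≤ Ideal.comap f q ∧
    (RingHom.ker f).minimalPrimes = {Ideal.comap f q} ∧
    ∀ p : Ideal R, p.IsPrime → RingHom.ker f ≤ p → Ideal.comap f q ≤ p := by
  have hqmem : q ∈ minimalPrimes S := by rw [hq]; rfl
  have hqprime : q.IsPrime := hqmem.1.1
  have hker : RingHom.ker f = Ideal.comap f ⊥ := by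
    ext x; simp [RingHom.mem_ker, Ideal.mem_comap]
  -- every minimal prime of ker f is comap f q
  have key : ∀ p ∈ (RingHom.ker f).minimalPrimes, p = Ideal.comap f q := by
    intro p hp
    rw [hker] at hp
    obtain ⟨p', hp', hp'eq⟩ := Ideal.exists_minimalPrimes_comap_eq f p hp
    have : p' ∈ minimalPrimes S := by
      rwa [minimalPrimes]
    rw [hq] at this
    rw [Set.mem_singleton_iff] at this
    rw [← hp'eq, this]
  have hle : RingHom.ker f ≤ Ideal.comap f q := by
    intro x hx
    have : f x = 0 := hx
    simp [Ideal.mem_comap, this]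
  have hcprime : (Ideal.comap f q).IsPrime := Ideal.comap_isPrime f q
  have hmem : Ideal.comap f q ∈ (RingHom.ker f).minimalPrimes := by
    obtain ⟨m, hm, hmle⟩ := Ideal.exists_minimalPrimes_le (J := Ideal.comap f q) hle
    rwa [key m hm] at hm
  refine ⟨hcprime, hle, ?_, ?_⟩
  · ext p
    constructor
    · intro hp; exact key p hp
    · intro hp; rw [Set.mem_singleton_iff] at hp; rw [hp]; exact hmem
  · intro p hpprime hple
    obtain ⟨m, hm, hmle⟩ := Ideal.exists_minimalPrimes_le (J := p) hple
    rw [key m hm] at hmle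
    exact hmle
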